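/- For every integer k ≥ 1, every integer N ≥ k, and all σ,τ ∈ P(k), writing d = |D(σ∨τ)|, the centered Weingarten function satisfies W̊g_k(σ,τ,N) = Σ_{j=#(σ∧τ)}^{k} ( Σ_{π ≤ σ∧τ, #π = j} μ(π,σ)·μ(π,τ) ) · Σ_{i=0}^{j−d} binom(j−d,i)·N^{−i}·a_{j−i}(N). -/

import Mathlib

/-!
Grouping the partitions `π` by `j = #π`, the claim reduces, for `d ≤ j`, to the identity
`∑_{i ≤ d} (d choose i) (-1/N)^i / (N)_{j-i} = ∑_{i ≤ j-d} (j-d choose i) N^{-i} a_{j-i}(N)`.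
Let `L` be the linear functional on `ℝ[X]` with `L (X^m) = 1/(N)_m`, so that
`a_m(N) = L ((X - 1/N)^m)`. The left side is `L (X^{j-d} (X - 1/N)^d)`, and expanding
`X^{j-d} = ((X - 1/N) + 1/N)^{j-d}` binomially turns it into the right side.
-/

open Finset

noncomputable section

namespace WgPerm

/-- Number of blocks of the partition of `α` corresponding to the setoid `s`. -/
def numBlocks {α : Type*} (s : Setoid α) : ℕ := Nat.card (Quotient s)

/-- Number of blocks of `s` contained in the block `B` of `t` (meaningful when `s ≤ t`). -/
def lam {α : Type*} (s t : Setoid α) (B : Quotient t) : ℕ :=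
  Nat.card {c : Quotient s // Quotient.mk t (Quotient.out c) = B}

/-- Möbius function of the partition lattice:
`μ(s,t) = ∏_B (−1)^{λ_B−1} (λ_B−1)!` over the blocks `B` of `t`. -/
def mobius {α : Type*} (s t : Setoid α) : ℤ :=
  ∏ᶠ B : Quotient t, (-1 : ℤ) ^ (lam s t B - 1) * (Nat.factorial (lam s t B - 1) : ℤ)

/-- Kernel partition `Π_i` of a tuple `i`. -/
def kerP {k N : ℕ} (i : Fin k → Fin N) : Setoid (Fin k) := Setoid.ker i

/-- `(i,j)` entry of the permutation matrix of `g`. -/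
def permEntry {N : ℕ} (g : Equiv.Perm (Fin N)) (i j : Fin N) : ℝ :=
  if g i = j then 1 else 0

/-- The Weingarten function for the symmetric group `S_N`. -/
def Wg (k N : ℕ) (σ τ : Setoid (Fin k)) : ℝ :=
  ∑ᶠ π ∈ {π : Setoid (Fin k) | π ≤ σ ⊓ τ},
    ((mobius π σ * mobius π τ : ℤ) : ℝ) / (Nat.descFactorial N (numBlocks π) : ℝ)

/-- `|D(π)|`: the number of singleton blocks of `π`. -/
def numSingletons {k : ℕ} (π : Setoid (Fin k)) : ℕ :=
  Nat.card {j : Fin k | ∀ m, π.r j m → m = j}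

/-- The centered Weingarten function for the symmetric group `S_N`. -/
def cWg (k N : ℕ) (σ τ : Setoid (Fin k)) : ℝ :=
  ∑ i ∈ Finset.range (numSingletons (σ ⊔ τ) + 1),
    ((numSingletons (σ ⊔ τ)).choose i : ℝ) * (-1 : ℝ) ^ i *
      ∑ᶠ π ∈ {π : Setoid (Fin k) | π ≤ σ ⊓ τ},
        ((mobius π σ * mobius π τ : ℤ) : ℝ) * ((N : ℝ) ^ i)⁻¹
          / (Nat.descFactorial N (numBlocks π - i) : ℝ)

/-- `a_k(N) = Σ_{l=0}^{k} binom(k,l)·(−N)^{−(k−l)}/(N)_l`. -/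
def aSeq (k N : ℕ) : ℝ :=
  ∑ l ∈ Finset.range (k + 1),
    (k.choose l : ℝ) * ((-(N : ℝ)) ^ (k - l))⁻¹ / (Nat.descFactorial N l : ℝ)

section MomentFunctional

open Polynomial

variable {R : Type*} [CommRing R]

def momentFunctional (f : ℕ → R) : R[X] →ₗ[R] R :=
  Polynomial.lsum fun m => LinearMap.mulRight R (f m)

theorem momentFunctional_C_mul_X_pow (f : ℕ → R) (a : R) (m : ℕ) :
    momentFunctional f (C a * X ^ m) = a * f m := by
  simp [momentFunctional, C_mul_X_pow_eq_monomial]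

theorem momentFunctional_X_sub_C_pow (f : ℕ → R) (x : R) (m : ℕ) :
    momentFunctional f ((X - C x) ^ m) =
      ∑ l ∈ range (m + 1), (m.choose l : R) * (-x) ^ (m - l) * f l := by
  rw [sub_eq_add_neg, ← C_neg, add_pow, map_sum]
  refine sum_congr rfl fun l _ => ?_
  rw [show X ^ l * C (-x) ^ (m - l) * (m.choose l : R[X]) =
      C ((m.choose l : R) * (-x) ^ (m - l)) * X ^ l by
    simp only [C_mul, C_pow, map_natCast]; ring,
    momentFunctional_C_mul_X_pow]

theorem momentFunctional_X_pow_mul_X_sub_C_pow (f : ℕ → R) (x : R) {d j : ℕ} (hdj : d ≤ j) :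
    momentFunctional f (X ^ (j - d) * (X - C x) ^ d) =
      ∑ i ∈ range (d + 1), (d.choose i : R) * (-x) ^ i * f (j - i) := by
  rw [sub_eq_add_neg, ← C_neg, add_comm, add_pow, mul_sum, map_sum]
  refine sum_congr rfl fun i hi => ?_
  have hid : i ≤ d := Nat.lt_succ_iff.mp (mem_range.mp hi)
  rw [show X ^ (j - d) * (C (-x) ^ i * X ^ (d - i) * (d.choose i : R[X])) =
      C ((d.choose i : R) * (-x) ^ i) * X ^ (j - i) by
    rw [show j - i = j - d + (d - i) by omega]; simp only [C_mul, C_pow, map_natCast]; ring,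
    momentFunctional_C_mul_X_pow]

theorem X_pow_mul_X_sub_C_pow_eq_sum (x : R) {d j : ℕ} (hdj : d ≤ j) :
    X ^ (j - d) * (X - C x) ^ d =
      ∑ i ∈ range (j - d + 1), C ((j - d).choose i * x ^ i) * (X - C x) ^ (j - i) := by
  conv_lhs => rw [← sub_add_cancel (X : R[X]) (C x), add_comm, add_pow, sum_mul]
  refine sum_congr rfl fun i hi => ?_
  have hi : i ≤ j - d := Nat.lt_succ_iff.mp (mem_range.mp hi)
  rw [show j - i = j - d - i + d by omega, pow_add]
  simp only [C_mul, C_pow, map_natCast]; ring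

theorem sum_choose_mul_neg_pow_eq_sum (f : ℕ → R) (x : R) {d j : ℕ} (hdj : d ≤ j) :
    ∑ i ∈ range (d + 1), (d.choose i : R) * (-x) ^ i * f (j - i) =
      ∑ i ∈ range (j - d + 1), ((j - d).choose i * x ^ i) *
        ∑ l ∈ range (j - i + 1), ((j - i).choose l : R) * (-x) ^ (j - i - l) * f l := by
  rw [← momentFunctional_X_pow_mul_X_sub_C_pow f x hdj, X_pow_mul_X_sub_C_pow_eq_sum x hdj,
    map_sum]
  simp only [← smul_eq_C_mul, map_smul, momentFunctional_X_sub_C_pow, smul_eq_mul]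

end MomentFunctional

theorem aSeq_eq_sum (m N : ℕ) :
    aSeq m N = ∑ l ∈ range (m + 1),
      (m.choose l : ℝ) * (-(N : ℝ)⁻¹) ^ (m - l) * (Nat.descFactorial N l : ℝ)⁻¹ := by
  simp only [aSeq, div_eq_mul_inv, ← inv_pow, inv_neg]

theorem sum_choose_neg_one_pow_div_descFactorial_eq (N : ℕ) {d j : ℕ} (hdj : d ≤ j) :
    ∑ i ∈ range (d + 1),
        (d.choose i : ℝ) * (-1) ^ i * ((N : ℝ) ^ i)⁻¹ / (Nat.descFactorial N (j - i) : ℝ) =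
      ∑ i ∈ range (j - d + 1), ((j - d).choose i : ℝ) * ((N : ℝ) ^ i)⁻¹ * aSeq (j - i) N := by
  have key := sum_choose_mul_neg_pow_eq_sum (fun l => (Nat.descFactorial N l : ℝ)⁻¹)
    (N : ℝ)⁻¹ hdj
  simp only [aSeq_eq_sum]
  convert key using 2 with i
  · rw [neg_pow (N : ℝ)⁻¹, inv_pow]; ring
  · rw [inv_pow]

section Partitions

variable {α : Type*} [Finite α]

instance finiteSetoid : Finite (Setoid α) :=
  Finite.of_injective (fun s : Setoid α => s.r) fun _ _ h =>
    Setoid.ext fun x y => iff_of_eq (congr_fun₂ h x y)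

theorem numBlocks_le_card (s : Setoid α) : numBlocks s ≤ Nat.card α :=
  Nat.card_le_card_of_surjective (Quotient.mk s) Quotient.mk_surjective

theorem numBlocks_anti {s t : Setoid α} (h : s ≤ t) : numBlocks t ≤ numBlocks s :=
  Nat.card_le_card_of_surjective (Quotient.map' id fun _ _ hxy => h hxy) fun q =>
    Quotient.inductionOn q fun a => ⟨Quotient.mk s a, rfl⟩

end Partitions

theorem numSingletons_le_numBlocks {k : ℕ} {π ρ : Setoid (Fin k)} (h : π ≤ ρ) :
    numSingletons ρ ≤ numBlocks π := by
  refine Nat.card_le_card_of_injective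
    (fun j : {j : Fin k | ∀ m, ρ.r j m → m = j} => Quotient.mk π j.1) ?_
  intro ⟨a, ha⟩ ⟨b, _⟩ hab
  exact Subtype.ext (ha b (h (Quotient.exact hab))).symm

theorem sum_Icc_finsum_numBlocks_mul {R : Type*} [CommSemiring R] {k : ℕ} (ρ : Setoid (Fin k))
    (c : Setoid (Fin k) → R) (g : ℕ → R) :
    ∑ j ∈ Icc (numBlocks ρ) k,
        (∑ᶠ π ∈ {π : Setoid (Fin k) | π ≤ ρ ∧ numBlocks π = j}, c π) * g j =
      ∑ᶠ π ∈ {π : Setoid (Fin k) | π ≤ ρ}, c π * g (numBlocks π) := by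
  classical
  have := Fintype.ofFinite (Setoid (Fin k))
  simp only [finsum_mem_eq_toFinset_sum, Set.toFinset_ofPred]
  have hmaps : ∀ π ∈ univ.filter (· ≤ ρ), numBlocks π ∈ Icc (numBlocks ρ) k := fun π hπ =>
    mem_Icc.mpr ⟨numBlocks_anti (mem_filter.mp hπ).2,
      (numBlocks_le_card π).trans_eq (Nat.card_eq_fintype_card.trans (Fintype.card_fin k))⟩
  rw [← sum_fiberwise_of_maps_to hmaps]
  refine sum_congr rfl fun j _ => ?_
  rw [sum_mul, filter_filter]
  exact sum_congr rfl fun π hπ => by rw [(mem_filter.mp hπ).2.2]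

theorem stmt10_general (k N : ℕ) (σ τ : Setoid (Fin k)) :
    cWg k N σ τ =
      ∑ j ∈ Finset.Icc (numBlocks (σ ⊓ τ)) k,
        (∑ᶠ π ∈ {π : Setoid (Fin k) | π ≤ σ ⊓ τ ∧ numBlocks π = j},
            ((mobius π σ * mobius π τ : ℤ) : ℝ)) *
          ∑ i ∈ Finset.range (j - numSingletons (σ ⊔ τ) + 1),
            ((j - numSingletons (σ ⊔ τ)).choose i : ℝ) * ((N : ℝ) ^ i)⁻¹ *
              aSeq (j - i) N := by
  classical
  have := Fintype.ofFinite (Setoid (Fin k))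
  rw [cWg, sum_Icc_finsum_numBlocks_mul]
  simp only [finsum_mem_eq_toFinset_sum, mul_sum]
  rw [sum_comm]
  refine sum_congr rfl fun π hmem => ?_
  have hπ : π ≤ σ ⊓ τ := by simpa using hmem
  have hd : numSingletons (σ ⊔ τ) ≤ numBlocks π :=
    numSingletons_le_numBlocks (hπ.trans (inf_le_left.trans le_sup_left))
  rw [← mul_sum, ← sum_choose_neg_one_pow_div_descFactorial_eq N hd, mul_sum]
  exact sum_congr rfl fun i _ => by ring

/-- reformulation of the centered Weingarten function via `a_k(N)`. -/
theorem stmt10 (k N : ℕ) (hk : 1 ≤ k) (hN : k ≤ N) (σ τ : Setoid (Fin k)) :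
    cWg k N σ τ =
      ∑ j ∈ Finset.Icc (numBlocks (σ ⊓ τ)) k,
        (∑ᶠ π ∈ {π : Setoid (Fin k) | π ≤ σ ⊓ τ ∧ numBlocks π = j},
            ((mobius π σ * mobius π τ : ℤ) : ℝ)) *
          ∑ i ∈ Finset.range (j - numSingletons (σ ⊔ τ) + 1),
            ((j - numSingletons (σ ⊔ τ)).choose i : ℝ) * ((N : ℝ) ^ i)⁻¹ *
              aSeq (j - i) N :=
  stmt10_general k N σ τ

end WgPerm

end
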